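/- Let 1 ≤ k ≤ d ≤ d' be integers and let L be a complex linear subspace of M_{d×d'} with N := dim L. Let {A_i}_{i=1}^{N} be k-singular-value-1 matrices lying in L with Tr(A_iᴴ A_j) = k·δ_{ij} (so they form an orthogonal basis of L), and let {B_j}_{j=1}^{M} be k-singular-value-1 matrices lying in the orthogonal complement L^⊥ (with respect to the trace inner product) with Tr(B_iᴴ B_j) = k·δ_{ij}, such that every C ∈ L^⊥ with Tr(B_jᴴ C) = 0 for all j is not a k-singular-value-1 matrix. If N + M < d·d', then the union {A_i}_{i=1}^{N} ∪ {B_j}_{j=1}^{M} is an (N+M)-number USV1Bk in M_{d×d'}. -/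
import Mathlib


open Matrix

/-- `A` is a `k`-singular-value-1 matrix. -/
def IsSV1 {m n : Type*} [Fintype m] [Fintype n] (k : ℕ) (A : Matrix m n ℂ) : Prop :=
  (Aᴴ * A) * (Aᴴ * A) = Aᴴ * A ∧ A.rank = k

private lemma trace_conj_swap {m n : Type*} [Fintype m] [Fintype n]
    (X Y : Matrix m n ℂ) : (Yᴴ * X).trace = star (Xᴴ * Y).trace := by
  rw [← Matrix.trace_conjTranspose, Matrix.conjTranspose_mul, Matrix.conjTranspose_conjTranspose]

set_option maxHeartbeats 1000000 in
/-- if `{A_i}` is an orthogonal family of `k`-singular-value-1 matrices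
spanning a subspace `L` (of dimension `N`), and `{B_j}` is an orthogonal family of
`k`-singular-value-1 matrices in `L^⊥` which is unextendible within `L^⊥`, and
`N + M < d·d'`, then the union `{A_i} ∪ {B_j}` is an `(N+M)`-number USV1Bk in
`M_{d×d'}`. -/
theorem usv1bk_union (k d d' N M : ℕ)
    (hk : 1 ≤ k) (hkd : k ≤ d) (hdd : d ≤ d')
    (L : Submodule ℂ (Matrix (Fin d) (Fin d') ℂ))
    (hN : N = Module.finrank ℂ L)
    (A : Fin N → Matrix (Fin d) (Fin d') ℂ)
    (B : Fin M → Matrix (Fin d) (Fin d') ℂ)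
    (hAmem : ∀ i, A i ∈ L)
    (hASV1 : ∀ i, IsSV1 k (A i))
    (hAorth : ∀ i j, ((A i)ᴴ * A j).trace = if i = j then (k : ℂ) else 0)
    (hBperp : ∀ j, ∀ C ∈ L, (Cᴴ * B j).trace = 0)
    (hBSV1 : ∀ j, IsSV1 k (B j))
    (hBorth : ∀ i j, ((B i)ᴴ * B j).trace = if i = j then (k : ℂ) else 0)
    (hBunext : ∀ C : Matrix (Fin d) (Fin d') ℂ,
      (∀ X ∈ L, (Xᴴ * C).trace = 0) → (∀ j, ((B j)ᴴ * C).trace = 0) → ¬ IsSV1 k C)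
    (hNM : N + M < d * d') :
    (∀ x : Fin N ⊕ Fin M, IsSV1 k (Sum.elim A B x)) ∧
    (∀ x y : Fin N ⊕ Fin M,
      ((Sum.elim A B x)ᴴ * Sum.elim A B y).trace = if x = y then (k : ℂ) else 0) ∧
    (∀ C : Matrix (Fin d) (Fin d') ℂ,
      (∀ x : Fin N ⊕ Fin M, ((Sum.elim A B x)ᴴ * C).trace = 0) → ¬ IsSV1 k C) := by
  have hkC : (k : ℂ) ≠ 0 := Nat.cast_ne_zero.mpr (by omega)
  -- A is linearly independent
  have hAind : LinearIndependent ℂ A := by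
    rw [Fintype.linearIndependent_iff]
    intro g hg j
    have := congrArg (fun X => ((A j)ᴴ * X).trace) hg
    simp only [Matrix.mul_sum, Matrix.trace_sum, Matrix.mul_smul, Matrix.trace_smul,
      Matrix.mul_zero, Matrix.trace_zero] at this
    have h2 : ∑ i, g i • ((A j)ᴴ * A i).trace = g j * (k : ℂ) := by
      rw [Finset.sum_eq_single j]
      · rw [hAorth j j, if_pos rfl]; simp [smul_eq_mul]
      · intro i _ hij
        rw [hAorth j i, if_neg (Ne.symm hij), smul_zero]
      · simp
    rw [h2] at this
    exact (mul_eq_zero.mp this).resolve_right hkC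
  -- A spans L
  have hspan : L ≤ Submodule.span ℂ (Set.range A) := by
    set A' : Fin N → L := fun i => ⟨A i, hAmem i⟩ with hA'
    have hA'ind : LinearIndependent ℂ A' :=
      LinearIndependent.of_comp L.subtype (show LinearIndependent ℂ (L.subtype ∘ A') from hAind)
    have hfd : FiniteDimensional ℂ L := FiniteDimensional.finiteDimensional_submodule L
    have hspan' : Submodule.span ℂ (Set.range A') = ⊤ :=
      hA'ind.span_eq_top_of_card_eq_finrank' (by simpa using hN)
    intro x hx
    have : (⟨x, hx⟩ : L) ∈ Submodule.span ℂ (Set.range A') := hspan' ▸ trivial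
    have := Submodule.mem_map_of_mem (f := L.subtype) this
    rw [← Submodule.span_image] at this
    have himg : L.subtype '' Set.range A' = Set.range A := by
      ext y; simp [hA', Set.range_comp]
    rwa [himg] at this
  refine ⟨?_, ?_, ?_⟩
  · rintro (i | j)
    · exact hASV1 i
    · exact hBSV1 j
  · rintro (i | j) (i' | j')
    · simpa [Sum.inl.injEq] using hAorth i i'
    · simp only [Sum.elim_inl, Sum.elim_inr, reduceCtorEq, if_false]
      exact hBperp j' (A i) (hAmem i)
    · simp only [Sum.elim_inl, Sum.elim_inr, reduceCtorEq, if_false]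
      rw [trace_conj_swap, hBperp j (A i') (hAmem i'), star_zero]
    · simpa [Sum.inr.injEq] using hBorth j j'
  · intro C hC
    refine hBunext C ?_ (fun j => hC (Sum.inr j))
    have key : ∀ X ∈ Submodule.span ℂ (Set.range A), (Xᴴ * C).trace = 0 := by
      intro X hX
      induction hX using Submodule.span_induction with
      | mem x hx =>
        obtain ⟨i, rfl⟩ := hx
        exact hC (Sum.inl i)
      | zero => simp
      | add x y _ _ hx hy =>
        rw [Matrix.conjTranspose_add, Matrix.add_mul, Matrix.trace_add, hx, hy, add_zero]
      | smul c x _ hx =>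
        rw [Matrix.conjTranspose_smul, Matrix.smul_mul, Matrix.trace_smul, hx, smul_zero]
    exact fun X hX => key X (hspan hX)
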